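/- Suppose a factorizable brane (six integers n^i, m^i with each pair coprime) satisfies both SUSY conditions Σ_I X^I U_I > 0 and Σ_I Y^I/U_I = 0 for some positive reals U_0, U_1, U_2, U_3, where X^I and Y^I are the standard products of winding numbers. If exactly one of the X^I is strictly positive and the other three are strictly negative (type A'), then this leads to a contradiction; i.e., a brane with one positive and three negative X^I cannot satisfy both SUSY conditions simultaneously. -/

import Mathlib

/-
Put `x_I = X^I U_I`. Since `X^I Y^I = P := n¹m¹n²m²n³m³` for every `I`, the second SUSY condition
reads `P · Σ_I 1/x_I = 0`, and `P ≠ 0` because `∏_I X^I = -P²` and no `X^I` vanishes. So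
`Σ_I 1/x_I = 0`. But if `x_J` is the only positive term and `Σ_I x_I > 0`, then `x_J > |x_K|` for
every `K ≠ J`, hence `1/x_J < 1/|x_K| ≤ Σ_{I ≠ J} 1/|x_I|`, i.e. `Σ_I 1/x_I < 0`.
-/

/-- The tadpole charges `X^I` of a factorizable 3-cycle. -/
def Xc (n1 m1 n2 m2 n3 m3 : ℤ) : Fin 4 → ℤ :=
  ![n1 * n2 * n3, -(n1 * m2 * m3), -(m1 * n2 * m3), -(m1 * m2 * n3)]

/-- The charges `Y^I` of a factorizable 3-cycle. -/
def Yc (n1 m1 n2 m2 n3 m3 : ℤ) : Fin 4 → ℤ :=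
  ![m1 * m2 * m3, -(m1 * n2 * n3), -(n1 * m2 * n3), -(n1 * n2 * m3)]

lemma Finset.sum_le_of_mem_of_nonpos {ι M : Type*} [AddCommGroup M] [PartialOrder M]
    [IsOrderedAddMonoid M] {s : Finset ι} {f : ι → M} {k : ι} (hk : k ∈ s)
    (hf : ∀ i ∈ s, f i ≤ 0) : ∑ i ∈ s, f i ≤ f k := by
  have := Finset.single_le_sum (f := fun i => -f i) (fun i hi => neg_nonneg.2 (hf i hi)) hk
  simpa only [Finset.sum_neg_distrib, neg_le_neg_iff] using this

lemma sum_inv_neg_of_sum_pos {ι : Type*} [Fintype ι] [DecidableEq ι] {x : ι → ℝ} {j k : ι}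
    (hkj : k ≠ j) (hneg : ∀ i, i ≠ j → x i < 0) (hsum : 0 < ∑ i, x i) :
    ∑ i, (x i)⁻¹ < 0 := by
  have hk : k ∈ Finset.univ.erase j := Finset.mem_erase.2 ⟨hkj, Finset.mem_univ k⟩
  have hneg' : ∀ i ∈ Finset.univ.erase j, x i < 0 := fun i hi => hneg i (Finset.ne_of_mem_erase hi)
  have hxk : -x k < x j := by
    have := Finset.sum_le_of_mem_of_nonpos hk fun i hi => (hneg' i hi).le
    rw [← Finset.add_sum_erase _ _ (Finset.mem_univ j)] at hsum
    linarith
  have hinv : ∑ i ∈ Finset.univ.erase j, (x i)⁻¹ ≤ (x k)⁻¹ :=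
    Finset.sum_le_of_mem_of_nonpos hk fun i hi => (inv_neg''.2 (hneg' i hi)).le
  have hjk : (x j)⁻¹ < -(x k)⁻¹ := by
    rw [← inv_neg]
    exact inv_strictAnti₀ (neg_pos.2 (hneg k hkj)) hxk
  rw [← Finset.add_sum_erase _ _ (Finset.mem_univ j)]
  linarith

lemma Xc_mul_Yc (n1 m1 n2 m2 n3 m3 : ℤ) (I : Fin 4) :
    Xc n1 m1 n2 m2 n3 m3 I * Yc n1 m1 n2 m2 n3 m3 I = n1 * m1 * n2 * m2 * n3 * m3 := by
  fin_cases I <;> simp [Xc, Yc] <;> ring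

lemma prod_Xc (n1 m1 n2 m2 n3 m3 : ℤ) :
    ∏ I, Xc n1 m1 n2 m2 n3 m3 I = -(n1 * m1 * n2 * m2 * n3 * m3) ^ 2 := by
  simp [Fin.prod_univ_four, Xc]
  ring

lemma Yc_div_eq (n1 m1 n2 m2 n3 m3 : ℤ) {I : Fin 4} (hX : Xc n1 m1 n2 m2 n3 m3 I ≠ 0) {u : ℝ}
    (hu : u ≠ 0) :
    (Yc n1 m1 n2 m2 n3 m3 I : ℝ) / u =
      (n1 * m1 * n2 * m2 * n3 * m3 : ℤ) * ((Xc n1 m1 n2 m2 n3 m3 I : ℝ) * u)⁻¹ := by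
  rw [← Xc_mul_Yc, Int.cast_mul]
  field_simp

theorem stmt_6_general (n1 m1 n2 m2 n3 m3 : ℤ)
    (U : Fin 4 → ℝ) (hU : ∀ I, 0 < U I)
    (hS1 : 0 < ∑ I, (Xc n1 m1 n2 m2 n3 m3 I : ℝ) * U I)
    (hS2 : ∑ I, (Yc n1 m1 n2 m2 n3 m3 I : ℝ) / U I = 0)
    (J : Fin 4) (hpos : 0 < Xc n1 m1 n2 m2 n3 m3 J)
    (hneg : ∀ I, I ≠ J → Xc n1 m1 n2 m2 n3 m3 I < 0) :
    False := by
  have hinv : ∑ I, ((Xc n1 m1 n2 m2 n3 m3 I : ℝ) * U I)⁻¹ < 0 :=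
    sum_inv_neg_of_sum_pos (exists_ne J).choose_spec
      (fun I hI => mul_neg_of_neg_of_pos (Int.cast_lt_zero.2 (hneg I hI)) (hU I)) hS1
  have hX : ∀ I, Xc n1 m1 n2 m2 n3 m3 I ≠ 0 := fun I =>
    if hI : I = J then hI ▸ hpos.ne' else (hneg I hI).ne
  have hP : n1 * m1 * n2 * m2 * n3 * m3 ≠ 0 := fun hP => by
    simpa [prod_Xc, hP] using Finset.prod_ne_zero_iff.2 fun I (_ : I ∈ Finset.univ) => hX I
  rw [Finset.sum_congr rfl fun I _ => Yc_div_eq _ _ _ _ _ _ (hX I) (hU I).ne', ← Finset.mul_sum,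
    mul_eq_zero, Int.cast_eq_zero] at hS2
  exact hS2.elim hP hinv.ne

/-- A type `A'` brane (exactly one `X^I > 0`, the other three negative) cannot
satisfy both SUSY conditions simultaneously. -/
theorem stmt_6 (n1 m1 n2 m2 n3 m3 : ℤ)
    (h1 : Int.gcd n1 m1 = 1) (h2 : Int.gcd n2 m2 = 1) (h3 : Int.gcd n3 m3 = 1)
    (U : Fin 4 → ℝ) (hU : ∀ I, 0 < U I)
    (hS1 : 0 < ∑ I, (Xc n1 m1 n2 m2 n3 m3 I : ℝ) * U I)
    (hS2 : ∑ I, (Yc n1 m1 n2 m2 n3 m3 I : ℝ) / U I = 0)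
    (J : Fin 4) (hpos : 0 < Xc n1 m1 n2 m2 n3 m3 J)
    (hneg : ∀ I, I ≠ J → Xc n1 m1 n2 m2 n3 m3 I < 0) :
    False :=
  stmt_6_general n1 m1 n2 m2 n3 m3 U hU hS1 hS2 J hpos hneg
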